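/- If ξ, ψ are i.i.d. on [0, π/2] with density sin(2θ), then E[cos²(ξ − ψ)] = 1/2 + π²/32. -/

import Mathlib

/-!
Expand `cos² (ξ - ψ) = 1/2 + (cos 2ξ cos 2ψ + sin 2ξ sin 2ψ) / 2`. By independence the
expectations of the products factor, and under the density `sin 2θ` on `[0, π/2]` one has
`E[cos 2ξ] = ∫ sin 2θ cos 2θ = 0` and `E[sin 2ξ] = ∫ sin² 2θ = π/4`, which gives
`1/2 + (π/4)² / 2`.
-/

open MeasureTheory Real Set

noncomputable def sinTwoMulMeasure : Measure ℝ :=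
  (volume.restrict (Icc 0 (π/2))).withDensity fun θ => ENNReal.ofReal (sin (2*θ))

lemma integral_withDensity_ofReal_restrict_Icc {a b : ℝ} (hab : a ≤ b) {f : ℝ → ℝ}
    (hf : Measurable f) (hf₀ : ∀ x ∈ Icc a b, 0 ≤ f x) (g : ℝ → ℝ) :
    ∫ x, g x ∂(volume.restrict (Icc a b)).withDensity (fun x => ENNReal.ofReal (f x)) =
      ∫ x in a..b, f x * g x := by
  rw [integral_withDensity_eq_integral_toReal_smul hf.ennreal_ofReal
    (ae_of_all _ fun _ => ENNReal.ofReal_lt_top), intervalIntegral.integral_of_le hab,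
    ← integral_Icc_eq_integral_Ioc]
  refine setIntegral_congr_fun measurableSet_Icc fun x hx => ?_
  simp [ENNReal.toReal_ofReal (hf₀ x hx)]

lemma integral_sinTwoMulMeasure (g : ℝ → ℝ) :
    ∫ x, g x ∂sinTwoMulMeasure = ∫ x in (0)..(π/2), sin (2*x) * g x :=
  integral_withDensity_ofReal_restrict_Icc (by positivity) (by fun_prop)
    (fun x hx => sin_nonneg_of_nonneg_of_le_pi (by linarith [hx.1]) (by linarith [hx.2])) g

lemma integral_cos_two_mul_sinTwoMulMeasure : ∫ x, cos (2*x) ∂sinTwoMulMeasure = 0 := by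
  rw [integral_sinTwoMulMeasure,
    intervalIntegral.integral_comp_mul_left (fun y => sin y * cos y) two_ne_zero]
  simp [integral_sin_mul_cos₁, mul_div_cancel₀ π two_ne_zero]

lemma integral_sin_two_mul_sinTwoMulMeasure : ∫ x, sin (2*x) ∂sinTwoMulMeasure = π/4 := by
  simp_rw [integral_sinTwoMulMeasure, ← sq]
  rw [intervalIntegral.integral_comp_mul_left (fun y => sin y ^ 2) two_ne_zero]
  simp [integral_sin_sq, mul_div_cancel₀ π two_ne_zero]
  ring

lemma cos_sub_sq (a b : ℝ) :
    cos (a - b) ^ 2 = 1/2 + (cos (2*a) * cos (2*b) + sin (2*a) * sin (2*b)) / 2 := by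
  rw [cos_sq, mul_sub, cos_sub]

lemma integral_cos_sub_sq_of_indepFun {Ω : Type*} [MeasurableSpace Ω] {μ : Measure Ω}
    [IsProbabilityMeasure μ] {X Y : Ω → ℝ} (hXY : ProbabilityTheory.IndepFun X Y μ)
    (hX : AEMeasurable X μ) (hY : AEMeasurable Y μ) :
    ∫ ω, cos (X ω - Y ω) ^ 2 ∂μ = 1/2 +
      ((∫ ω, cos (2 * X ω) ∂μ) * (∫ ω, cos (2 * Y ω) ∂μ) +
        (∫ ω, sin (2 * X ω) ∂μ) * (∫ ω, sin (2 * Y ω) ∂μ)) / 2 := by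
  have icos : Integrable (fun ω => cos (2 * X ω) * cos (2 * Y ω)) μ :=
    .of_bound (by fun_prop) 1 <| ae_of_all _ fun ω => by
      rw [norm_mul]; exact mul_le_one₀ (abs_cos_le_one _) (norm_nonneg _) (abs_cos_le_one _)
  have isin : Integrable (fun ω => sin (2 * X ω) * sin (2 * Y ω)) μ :=
    .of_bound (by fun_prop) 1 <| ae_of_all _ fun ω => by
      rw [norm_mul]; exact mul_le_one₀ (abs_sin_le_one _) (norm_nonneg _) (abs_sin_le_one _)
  have hcos : ∫ ω, cos (2 * X ω) * cos (2 * Y ω) ∂μ =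
      (∫ ω, cos (2 * X ω) ∂μ) * ∫ ω, cos (2 * Y ω) ∂μ :=
    (hXY.comp (φ := fun x => cos (2 * x)) (ψ := fun x => cos (2 * x)) (by fun_prop)
      (by fun_prop)).integral_fun_mul_eq_mul_integral (by fun_prop) (by fun_prop)
  have hsin : ∫ ω, sin (2 * X ω) * sin (2 * Y ω) ∂μ =
      (∫ ω, sin (2 * X ω) ∂μ) * ∫ ω, sin (2 * Y ω) ∂μ :=
    (hXY.comp (φ := fun x => sin (2 * x)) (ψ := fun x => sin (2 * x)) (by fun_prop)
      (by fun_prop)).integral_fun_mul_eq_mul_integral (by fun_prop) (by fun_prop)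
  simp_rw [cos_sub_sq]
  rw [integral_add (integrable_const _), integral_const, integral_div, integral_add icos isin,
    hcos, hsin]
  · simp
  · exact (icos.add isin).div_const 2

/-- If ξ, ψ are i.i.d. on [0, π/2] with density sin(2θ), then
E[cos²(ξ − ψ)] = 1/2 + π²/32. -/
theorem mean_cos_sq_diff
    {Ω : Type*} [MeasurableSpace Ω] (μ : Measure Ω) [IsProbabilityMeasure μ]
    (ξ ψ : Ω → ℝ) (hmξ : Measurable ξ) (hmψ : Measurable ψ)
    (hindep : ProbabilityTheory.IndepFun ξ ψ μ)
    (hξ : μ.map ξ = (volume.restrict (Icc 0 (π/2))).withDensity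
      (fun θ => ENNReal.ofReal (Real.sin (2*θ))))
    (hψ : μ.map ψ = (volume.restrict (Icc 0 (π/2))).withDensity
      (fun θ => ENNReal.ofReal (Real.sin (2*θ)))) :
    (∫ ω, Real.cos (ξ ω - ψ ω) ^ 2 ∂μ) = 1/2 + π^2/32 := by
  have integral_comp_of_law {X : Ω → ℝ} (hX : Measurable X)
      (hlaw : μ.map X = sinTwoMulMeasure)
      {g : ℝ → ℝ} (hg : Continuous g) :
      ∫ ω, g (X ω) ∂μ = ∫ x, g x ∂sinTwoMulMeasure := by
    rw [← hlaw, integral_map hX.aemeasurable hg.aestronglyMeasurable]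
  have hcos : Continuous fun x : ℝ => cos (2 * x) := by fun_prop
  have hsin : Continuous fun x : ℝ => sin (2 * x) := by fun_prop
  rw [integral_cos_sub_sq_of_indepFun hindep hmξ.aemeasurable hmψ.aemeasurable,
    integral_comp_of_law hmξ hξ hcos, integral_comp_of_law hmψ hψ hcos,
    integral_comp_of_law hmξ hξ hsin, integral_comp_of_law hmψ hψ hsin,
    integral_cos_two_mul_sinTwoMulMeasure, integral_sin_two_mul_sinTwoMulMeasure]
  ring
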